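/- Let k ≥ 2, n ≥ 2k, d ≥ 1 and let (G_0,...,G_r) be an (n,d,k,2k)-system of grids. Then for any 0 ≤ i ≤ r and any G_i-block B, it holds that |Par(B)| < 3^d · |B|. -/

import Mathlib

open Finset

/-- `I[:ℓ]`: the set of the `ℓ` smallest elements of `I` (or `I` itself if `|I| < ℓ`). -/
def takeSmallest (I : Finset ℕ) (ℓ : ℕ) : Finset ℕ :=
  I.filter fun x => (I.filter fun y => y ≤ x).card ≤ ℓ

/-- `I[ℓ+1:] = I \ I[:ℓ]`. -/
def dropSmallest (I : Finset ℕ) (ℓ : ℕ) : Finset ℕ :=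
  I \ takeSmallest I ℓ

/-- An `(n,w)`-interval partition: a partition of `[n] = {1,…,n}` into consecutive,
pairwise disjoint intervals `I_1, …, I_t`, each of size `w` or `w+1`, where for `j < j'`
every element of `I j` is smaller than every element of `I j'`. -/
structure IntervalPartition (n w : ℕ) where
  t : ℕ
  I : Fin t → Finset ℕ
  interval : ∀ j, ∃ a b, 1 ≤ a ∧ a ≤ b ∧ b ≤ n ∧ I j = Finset.Icc a b
  size : ∀ j, (I j).card = w ∨ (I j).card = w + 1
  cover : ∀ x ∈ Finset.Icc 1 n, ∃ j, x ∈ I j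
  ordered : ∀ j j' : Fin t, j < j' → ∀ x ∈ I j, ∀ y ∈ I j', x < y

/-- The hypergrid `[n]^d`, as a set of tuples. -/
def cube (n d : ℕ) : Set (Fin d → ℕ) :=
  {x | ∀ i, 1 ≤ x i ∧ x i ≤ n}

/-- The `(n,d,k,w)`-grid induced by an `(n,w)`-interval partition. -/
def gridOf (n d k w : ℕ) (P : IntervalPartition n w) : Set (Fin d → ℕ) :=
  {x ∈ cube n d | ∃ i : Fin d, ∃ j : Fin P.t, x i ∈ takeSmallest (P.I j) (k - 1)}

/-- `G ∈ 𝒢(n,d,k,w)`: `G` is the grid induced by some `(n,w)`-interval partition. -/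
def IsGrid (n d k w : ℕ) (G : Set (Fin d → ℕ)) : Prop :=
  ∃ P : IntervalPartition n w, G = gridOf n d k w P

/-- Two entries of `[n]^d` are neighbors if `∑ i, |x i − y i| = 1`. -/
def Neighbor {d : ℕ} (x y : Fin d → ℕ) : Prop :=
  (∑ i, Nat.dist (x i) (y i)) = 1

/-- A `G`-block: a connected component of the neighborhood graph on `[n]^d \ G`. -/
def IsBlock (n d : ℕ) (G B : Set (Fin d → ℕ)) : Prop :=
  B.Nonempty ∧ B ⊆ cube n d \ G ∧
    (∀ x ∈ B, ∀ y ∈ B,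
      Relation.ReflTransGen
        (fun a b => a ∈ cube n d \ G ∧ b ∈ cube n d \ G ∧ Neighbor a b) x y) ∧
    (∀ x ∈ B, ∀ y, y ∈ cube n d \ G → Neighbor x y → y ∈ B)

/-- The closure `B̄` of a block `B`. -/
def blockClosure (n d k : ℕ) (B : Set (Fin d → ℕ)) : Set (Fin d → ℕ) :=
  {x ∈ cube n d | ∃ y ∈ B, ∀ i, Nat.dist (x i) (y i) < k}

/-- The boundary `∂B = B̄ \ B` of a block `B`. -/
def blockBoundary (n d k : ℕ) (B : Set (Fin d → ℕ)) : Set (Fin d → ℕ) :=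
  blockClosure n d k B \ B

/-- A valid location of a width-`k` subarray in `[n]^d`: an element of `[n−k+1]^d`. -/
def ValidLoc (n d k : ℕ) (a : Fin d → ℕ) : Prop :=
  ∀ i, 1 ≤ a i ∧ a i ≤ n - k + 1

/-- The width-`k` box with lowest corner `a`: `{a_1,…,a_1+k−1} × ⋯ × {a_d,…,a_d+k−1}`. -/
def kbox (d k : ℕ) (a : Fin d → ℕ) : Set (Fin d → ℕ) :=
  {x | ∀ i, a i ≤ x i ∧ x i ≤ a i + k - 1}

/-- Some forbidden pattern of `F` occurs as a consecutive subarray of `A` at location `a`;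
patterns are compared on `[k]^d`. -/
def HasCopyAt {σ : Type*} (d k : ℕ) (F : Set ((Fin d → ℕ) → σ))
    (A : (Fin d → ℕ) → σ) (a : Fin d → ℕ) : Prop :=
  ∃ S ∈ F, ∀ j : Fin d → ℕ, (∀ i, 1 ≤ j i ∧ j i ≤ k) →
    A (fun i => a i + j i - 1) = S j

/-- `A` contains an `F`-copy lying inside the set `X`. -/
def HasCopyIn {σ : Type*} (n d k : ℕ) (F : Set ((Fin d → ℕ) → σ))
    (A : (Fin d → ℕ) → σ) (X : Set (Fin d → ℕ)) : Prop :=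
  ∃ a, ValidLoc n d k a ∧ HasCopyAt d k F A a ∧ kbox d k a ⊆ X

/-- `A` satisfies the `k`-local property `P(F)`: it contains no `F`-copy. -/
def SatisfiesP {σ : Type*} (n d k : ℕ) (F : Set ((Fin d → ℕ) → σ))
    (A : (Fin d → ℕ) → σ) : Prop :=
  ¬ ∃ a, ValidLoc n d k a ∧ HasCopyAt d k F A a

/-- `A` is `ε`-far from `P(F)`: every array satisfying `P(F)` differs from `A`
in at least `ε·n^d` entries of `[n]^d`. -/
def FarFrom {σ : Type*} (n d k : ℕ) (F : Set ((Fin d → ℕ) → σ)) (ε : ℝ)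
    (A : (Fin d → ℕ) → σ) : Prop :=
  ∀ A' : (Fin d → ℕ) → σ, SatisfiesP n d k F A' →
    ε * (n : ℝ) ^ d ≤ ({x | x ∈ cube n d ∧ A x ≠ A' x}).ncard

/-- A block `B` is `(P,A)`-unrepairable: every array agreeing with `A` on `∂B`
(including `A` itself) contains an `F`-copy lying inside `B̄`. -/
def Unrepairable {σ : Type*} (n d k : ℕ) (F : Set ((Fin d → ℕ) → σ))
    (A : (Fin d → ℕ) → σ) (B : Set (Fin d → ℕ)) : Prop :=
  ∀ A' : (Fin d → ℕ) → σ, (∀ x ∈ blockBoundary n d k B, A' x = A x) →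
    HasCopyIn n d k F A' (blockClosure n d k B)

/-- `r = ⌊log₂(n/w)⌋`. -/
def sysR (n w : ℕ) : ℕ := Nat.log 2 (n / w)

/-- An `(n,d,k,w)`-system of grids `(G_0, …, G_r)` with `r = ⌊log₂(n/w)⌋`:
`G_i ∈ 𝒢(n,d,k,⌊n/2^(r−i)⌋)` and `G_0 ⊇ G_1 ⊇ ⋯ ⊇ G_r`. -/
structure GridSystem (n d k w : ℕ) where
  G : ℕ → Set (Fin d → ℕ)
  isGrid : ∀ i ≤ sysR n w, IsGrid n d k (n / 2 ^ (sysR n w - i)) (G i)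
  nested : ∀ i j : ℕ, j ≤ i → i ≤ sysR n w → G i ⊆ G j

/-- A `G_i`-block `B` is a `(P,A)`-witness: either `i = 0` and `A` contains an `F`-copy
inside `B̄`, or `i > 0` and `B` is `(P,A)`-unrepairable. -/
def IsWitness {σ : Type*} (n d k w : ℕ) (S : GridSystem n d k w)
    (F : Set ((Fin d → ℕ) → σ)) (A : (Fin d → ℕ) → σ)
    (i : ℕ) (B : Set (Fin d → ℕ)) : Prop :=
  i ≤ sysR n w ∧ IsBlock n d (S.G i) B ∧
    ((i = 0 ∧ HasCopyIn n d k F A (blockClosure n d k B)) ∨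
      (0 < i ∧ Unrepairable n d k F A B))

/-- A witness is maximal if all of its ancestors (blocks of coarser grids containing it)
are `(P,A)`-repairable. -/
def IsMaximalWitness {σ : Type*} (n d k w : ℕ) (S : GridSystem n d k w)
    (F : Set ((Fin d → ℕ) → σ)) (A : (Fin d → ℕ) → σ)
    (i : ℕ) (B : Set (Fin d → ℕ)) : Prop :=
  IsWitness n d k w S F A i B ∧
    ∀ j, i < j → j ≤ sysR n w → ∀ B', IsBlock n d (S.G j) B' → B ⊆ B' →
      ¬ Unrepairable n d k F A B'

/-- The family `W` of all maximal `(P,A)`-witness blocks. -/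
def MaxWitnessFamily {σ : Type*} (n d k w : ℕ) (S : GridSystem n d k w)
    (F : Set ((Fin d → ℕ) → σ)) (A : (Fin d → ℕ) → σ) :
    Set (Set (Fin d → ℕ)) :=
  {B | ∃ i, IsMaximalWitness n d k w S F A i B}

/-- `Par(B)` for a `G_i`-block `B`: the `G_{i+1}`-block containing `B` if `i < r`
(expressed as the union of all such blocks, of which there is exactly one), and
`[n]^d` for `i = r`. -/
def parentSet (n d k w : ℕ) (S : GridSystem n d k w) (i : ℕ)
    (B : Set (Fin d → ℕ)) : Set (Fin d → ℕ) :=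
  if i = sysR n w then cube n d
  else ⋃₀ {B' | IsBlock n d (S.G (i + 1)) B' ∧ B ⊆ B'}

/-!
Off the grid, a point has every coordinate in the *core* `[a + k - 1, b]` of the interval
`[a, b]` of the partition containing it, and neighbours can only move within a core (stepping
out of a core lands on one of the `k - 1` grid lines at the start of an interval). Hence a block
is a box of cores and `|B| = ∏ (|I_j| - k + 1)`.

Since `G_{i+1} ⊆ G_i`, every left endpoint of an interval of the coarser partition is one of
the finer partition too, so the coarser interval containing `I_j` is `I_j` together with the
finer intervals in between. Finer intervals have length at least `w ≥ 2k`, coarser ones at most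
`2w + 2`, so at most one finer interval is added, and each side of the parent box is less than
three times the corresponding side of `B`. At the top level the parent is `[n]^d`, and the
intervals of `B` are all of `[n]`.
-/

theorem ncard_Icc_pi {ι : Type*} [Fintype ι] [DecidableEq ι] (lo hi : ι → ℕ) :
    (Set.Icc lo hi).ncard = ∏ i, (hi i + 1 - lo i) := by
  rw [← Finset.coe_Icc, Set.ncard_coe_finset, Pi.card_Icc]
  simp [Nat.card_Icc]

theorem prod_lt_pow_mul_prod {ι : Type*} [Fintype ι] [Nonempty ι] {f g : ι → ℕ} {c : ℕ}
    (h : ∀ i, f i < c * g i) : ∏ i, f i < c ^ Fintype.card ι * ∏ i, g i := by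
  rw [← Finset.card_univ, ← Finset.prod_const, ← Finset.prod_mul_distrib]
  by_cases hf : ∀ i, 0 < f i
  · exact Finset.prod_lt_prod_of_nonempty (fun i _ => hf i) (fun i _ => h i) Finset.univ_nonempty
  · obtain ⟨i, hi⟩ := not_forall.mp hf
    rw [Finset.prod_eq_zero (Finset.mem_univ i) (Nat.eq_zero_of_not_pos hi)]
    exact Finset.prod_pos fun j _ => (Nat.zero_le _).trans_lt (h j)

theorem ncard_lt_pow_mul_ncard_Icc {ι : Type*} [Fintype ι] [DecidableEq ι] [Nonempty ι]
    {X : Set (ι → ℕ)} {lo hi lo' hi' : ι → ℕ} {c : ℕ} (hX : X ⊆ Set.Icc lo hi)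
    (h : ∀ i, hi i + 1 - lo i < c * (hi' i + 1 - lo' i)) :
    X.ncard < c ^ Fintype.card ι * (Set.Icc lo' hi').ncard := by
  calc X.ncard ≤ (Set.Icc lo hi).ncard := Set.ncard_le_ncard hX (Set.finite_Icc lo hi)
    _ < c ^ Fintype.card ι * (Set.Icc lo' hi').ncard := by
      rw [ncard_Icc_pi, ncard_Icc_pi]
      exact prod_lt_pow_mul_prod h

lemma mem_takeSmallest_Icc {a b ℓ x : ℕ} :
    x ∈ takeSmallest (Finset.Icc a b) ℓ ↔ a ≤ x ∧ x ≤ b ∧ x < a + ℓ := by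
  have hfil : ((Finset.Icc a b).filter fun y => y ≤ x) = Finset.Icc a (min b x) := by
    ext y; simp only [Finset.mem_filter, Finset.mem_Icc]; omega
  simp only [takeSmallest, Finset.mem_filter, hfil, Nat.card_Icc, Finset.mem_Icc]
  omega

namespace IntervalPartition

variable {n w w' k : ℕ} {P : IntervalPartition n w} {a b c e x y : ℕ}

def IsPart (P : IntervalPartition n w) (a b : ℕ) : Prop :=
  ∃ j, P.I j = Finset.Icc a b

def IsCut (P : IntervalPartition n w) (x : ℕ) : Prop :=
  (∃ b, P.IsPart x b) ∨ x = n + 1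

def OffGrid (P : IntervalPartition n w) (k x : ℕ) : Prop :=
  ∃ a b, P.IsPart a b ∧ a + (k - 1) ≤ x ∧ x ≤ b

lemma IsPart.bounds (h : P.IsPart a b) : 1 ≤ a ∧ a ≤ b ∧ b ≤ n := by
  obtain ⟨j, hj⟩ := h
  obtain ⟨a₀, b₀, ha₀, hab₀, hb₀, hj₀⟩ := P.interval j
  rw [hj₀, ← Finset.coe_inj, Finset.coe_Icc, Finset.coe_Icc, Set.Icc_eq_Icc_iff hab₀] at hj
  omega

lemma IsPart.card_eq (h : P.IsPart a b) : b + 1 - a = w ∨ b + 1 - a = w + 1 := by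
  obtain ⟨j, hj⟩ := h
  simpa [hj, Nat.card_Icc] using P.size j

lemma exists_isPart (h₁ : 1 ≤ x) (hn : x ≤ n) : ∃ a b, P.IsPart a b ∧ a ≤ x ∧ x ≤ b := by
  obtain ⟨j, hj⟩ := P.cover x (Finset.mem_Icc.mpr ⟨h₁, hn⟩)
  obtain ⟨a, b, -, -, -, hab⟩ := P.interval j
  rw [hab, Finset.mem_Icc] at hj
  exact ⟨a, b, ⟨j, hab⟩, hj⟩

lemma IsPart.eq_of_mem (h : P.IsPart a b) (h' : P.IsPart c e) (hax : a ≤ x) (hxb : x ≤ b)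
    (hcx : c ≤ x) (hxe : x ≤ e) : a = c ∧ b = e := by
  obtain ⟨j, hj⟩ := h
  obtain ⟨j', hj'⟩ := h'
  have hxj : x ∈ P.I j := by simp [hj, hax, hxb]
  have hxj' : x ∈ P.I j' := by simp [hj', hcx, hxe]
  obtain rfl : j = j' := by
    by_contra hne
    rcases lt_or_gt_of_ne hne with hlt | hlt
    · exact lt_irrefl x (P.ordered _ _ hlt x hxj x hxj')
    · exact lt_irrefl x (P.ordered _ _ hlt x hxj' x hxj)
  rw [hj, ← Finset.coe_inj, Finset.coe_Icc, Finset.coe_Icc,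
    Set.Icc_eq_Icc_iff (hax.trans hxb)] at hj'
  exact hj'

lemma IsCut.le (h : P.IsCut x) : x ≤ n + 1 := by
  rcases h with ⟨b, hb⟩ | rfl
  · have := hb.bounds
    omega
  · rfl

lemma IsPart.lt_of_isCut (h : P.IsPart a b) (hy : P.IsCut y) (hay : a < y) : b < y := by
  have := h.bounds
  rcases hy with ⟨e, hye⟩ | rfl
  · by_contra! hby
    have := hye.bounds
    have := h.eq_of_mem hye hay.le hby le_rfl (by omega)
    omega
  · omega

lemma IsPart.isCut_succ (h : P.IsPart a b) : P.IsCut (b + 1) := by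
  have := h.bounds
  rcases (show b < n ∨ b = n by omega) with hb | rfl
  · obtain ⟨c, e, hce, hc, he⟩ := P.exists_isPart (x := b + 1) (by omega) hb
    obtain rfl : c = b + 1 := by
      by_contra
      have := hce.eq_of_mem h (x := b) (by omega) (by omega) (by omega) le_rfl
      omega
    exact Or.inl ⟨e, hce⟩
  · exact Or.inr rfl

/-- Consecutive cuts are `w` or `w + 1` apart; non-consecutive ones at least `2w`. -/
lemma IsCut.gap (hx : P.IsCut x) (hy : P.IsCut y) (hxy : x < y) :
    (w ≤ y - x ∧ y - x ≤ w + 1) ∨ 2 * w ≤ y - x := by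
  have := hy.le
  rcases hx with ⟨e, hxe⟩ | rfl
  · have := hxe.lt_of_isCut hy hxy
    have := hxe.card_eq
    rcases (show e + 1 = y ∨ e + 1 < y by omega) with h | h
    · omega
    · obtain ⟨f, hf⟩ : ∃ f, P.IsPart (e + 1) f := by
        rcases hxe.isCut_succ with h' | h'
        · exact h'
        · omega
      have := hf.lt_of_isCut hy h
      have := hf.card_eq
      omega
  · omega

lemma IsPart.offGrid_iff (h : P.IsPart a b) (hax : a ≤ x) (hxb : x ≤ b) :
    P.OffGrid k x ↔ a + (k - 1) ≤ x := by
  refine ⟨fun ⟨c, e, hce, hcx, hxe⟩ => ?_, fun hx => ⟨a, b, h, hx, hxb⟩⟩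
  have := h.eq_of_mem hce hax hxb (by omega) hxe
  omega

lemma exists_mem_takeSmallest_iff {ℓ : ℕ} :
    (∃ j, x ∈ takeSmallest (P.I j) ℓ) ↔ ∃ a b, P.IsPart a b ∧ a ≤ x ∧ x ≤ b ∧ x < a + ℓ := by
  constructor
  · rintro ⟨j, hj⟩
    obtain ⟨a, b, -, -, -, hab⟩ := P.interval j
    rw [hab, mem_takeSmallest_Icc] at hj
    exact ⟨a, b, ⟨j, hab⟩, hj⟩
  · rintro ⟨a, b, ⟨j, hab⟩, hx⟩
    exact ⟨j, by rwa [hab, mem_takeSmallest_Icc]⟩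

lemma IsPart.offGrid_step (hk : 2 ≤ k) (h : P.IsPart a b) (hx : a + (k - 1) ≤ x) (hxb : x ≤ b)
    (hy : P.OffGrid k y) (hxy : Nat.dist x y ≤ 1) : a + (k - 1) ≤ y ∧ y ≤ b := by
  obtain ⟨c, e, hce, hcy, hye⟩ := hy
  unfold Nat.dist at hxy
  by_cases hyb : y ≤ b
  · have := h.eq_of_mem hce (x := y) (by omega) hyb (by omega) hye
    omega
  · have := h.eq_of_mem hce (x := b) (by omega) le_rfl (by omega) (by omega)
    omega

/-- The first `k - 1` points of an interval of `D` lie on the grid of `C`, which forces them to be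
the first `k - 1` points of an interval of `C`. -/
lemma IsCut.of_offGrid_imp (hk : 2 ≤ k) (hw : 2 * k ≤ w) (hw' : k ≤ w')
    {C : IntervalPartition n w} {D : IntervalPartition n w'}
    (hCD : ∀ m, C.OffGrid k m → D.OffGrid k m) (hx : D.IsCut x) : C.IsCut x := by
  rcases hx with ⟨b', hD⟩ | rfl
  · have := hD.bounds
    have := hD.card_eq
    have hon : ∀ m, x ≤ m → m < x + (k - 1) → ¬ C.OffGrid k m := fun m h₁ h₂ hm => by
      have := (hD.offGrid_iff h₁ (by omega)).mp (hCD m hm)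
      omega
    obtain ⟨c, e, hC, hcx, hxe⟩ := C.exists_isPart (x := x) (by omega) (by omega)
    have := hC.card_eq
    have h₁ := mt (hC.offGrid_iff hcx hxe).mpr (hon x le_rfl (by omega))
    have h₂ := mt (hC.offGrid_iff (x := x + (k - 2)) (by omega) (by omega)).mpr
      (hon _ (by omega) (by omega))
    obtain rfl : x = c := by omega
    exact Or.inl ⟨e, hC⟩
  · exact Or.inr rfl

theorem core_card_lt_three_mul (hk : 2 ≤ k) (hw : 2 * k ≤ w) (hw' : w' ≤ 2 * w + 1)
    {C : IntervalPartition n w} {D : IntervalPartition n w'} (hCD : ∀ x, D.IsCut x → C.IsCut x)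
    {a b a' b' m : ℕ} (hC : C.IsPart a b) (hD : D.IsPart a' b')
    (ham : a + (k - 1) ≤ m) (hmb : m ≤ b) (ham' : a' + (k - 1) ≤ m) (hmb' : m ≤ b') :
    b' + 1 - (a' + (k - 1)) < 3 * (b + 1 - (a + (k - 1))) := by
  have ha : C.IsCut a := Or.inl ⟨b, hC⟩
  have hb : C.IsCut (b + 1) := hC.isCut_succ
  have ha' : C.IsCut a' := hCD _ (Or.inl ⟨b', hD⟩)
  have hb' : C.IsCut (b' + 1) := hCD _ hD.isCut_succ
  have hle : a' ≤ a := by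
    by_contra! h
    have := hC.lt_of_isCut ha' h
    omega
  have hle' : b ≤ b' := by
    by_contra! h
    have := hC.lt_of_isCut hb' (by omega)
    omega
  have hleft := ha'.gap ha
  have hright := hb.gap hb'
  have := hC.card_eq
  have := hD.card_eq
  omega

end IntervalPartition

open IntervalPartition

section Blocks

variable {n d w k : ℕ} {P : IntervalPartition n w}

theorem mem_cube_sdiff_gridOf_iff {x : Fin d → ℕ} :
    x ∈ cube n d \ gridOf n d k w P ↔ ∀ i, P.OffGrid k (x i) := by
  constructor
  · rintro ⟨hx, hxG⟩ i
    obtain ⟨a, b, hab, hax, hxb⟩ := P.exists_isPart (hx i).1 (hx i).2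
    rw [hab.offGrid_iff hax hxb]
    by_contra! hlt
    exact hxG ⟨hx, i, exists_mem_takeSmallest_iff.mpr ⟨a, b, hab, hax, hxb, hlt⟩⟩
  · intro h
    refine ⟨fun i => ?_, ?_⟩
    · obtain ⟨a, b, hab, hax, hxb⟩ := h i
      have := hab.bounds
      omega
    · rintro ⟨-, i, hi⟩
      obtain ⟨a, b, hab, hax, hxb, hlt⟩ := exists_mem_takeSmallest_iff.mp hi
      have := (hab.offGrid_iff hax hxb).mp (h i)
      omega

theorem offGrid_of_gridOf_subset {w' : ℕ} (hd : 0 < d) {C : IntervalPartition n w}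
    {D : IntervalPartition n w'} (hsub : gridOf n d k w' D ⊆ gridOf n d k w C) {m : ℕ}
    (hm : C.OffGrid k m) : D.OffGrid k m := by
  have hC : (fun _ : Fin d => m) ∈ cube n d \ gridOf n d k w C :=
    mem_cube_sdiff_gridOf_iff.mpr fun _ => hm
  exact mem_cube_sdiff_gridOf_iff.mp ⟨hC.1, fun h => hC.2 (hsub h)⟩ ⟨0, hd⟩

theorem cube_eq_Icc : cube n d = Set.Icc (fun _ => 1) (fun _ => n) :=
  Set.ext fun _ => ⟨fun h => ⟨fun i => (h i).1, fun i => (h i).2⟩, fun h i => ⟨h.1 i, h.2 i⟩⟩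

theorem exists_isPart_of_mem_cube_sdiff_gridOf {x : Fin d → ℕ}
    (hx : x ∈ cube n d \ gridOf n d k w P) :
    ∃ a b : Fin d → ℕ, (∀ i, P.IsPart (a i) (b i)) ∧ x ∈ Set.Icc (fun i => a i + (k - 1)) b := by
  choose a b hab hax hxb using mem_cube_sdiff_gridOf_iff.mp hx
  exact ⟨a, b, hab, hax, hxb⟩

theorem Neighbor.dist_le_one {u v : Fin d → ℕ} (h : Neighbor u v) (i : Fin d) :
    Nat.dist (u i) (v i) ≤ 1 :=
  h ▸ Finset.single_le_sum (f := fun j => Nat.dist (u j) (v j)) (fun _ _ => Nat.zero_le _)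
    (Finset.mem_univ i)

theorem neighbor_update {u : Fin d → ℕ} {i : Fin d} {z : ℕ} (h : Nat.dist z (u i) = 1) :
    Neighbor (Function.update u i z) u := by
  unfold Neighbor
  rw [Finset.sum_eq_single i (fun j _ hj => by simp [hj]) (by simp)]
  simpa using h

theorem sum_dist_update {x u : Fin d → ℕ} (i : Fin d) (z : ℕ) :
    ∑ j, Nat.dist (x j) (Function.update u i z j) + Nat.dist (x i) (u i) =
      ∑ j, Nat.dist (x j) (u j) + Nat.dist (x i) z := by
  simp only [← Finset.add_sum_erase _ _ (Finset.mem_univ i), Function.update_self]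
  rw [Finset.sum_congr rfl fun j hj => by rw [Function.update_of_ne (Finset.ne_of_mem_erase hj)]]
  ring

theorem reflTransGen_of_mem_Icc {lo hi x y : Fin d → ℕ} (hx : x ∈ Set.Icc lo hi)
    (hy : y ∈ Set.Icc lo hi) :
    Relation.ReflTransGen (fun u v => u ∈ Set.Icc lo hi ∧ v ∈ Set.Icc lo hi ∧ Neighbor u v)
      x y := by
  induction hs : ∑ j, Nat.dist (x j) (y j) generalizing y with
  | zero =>
    obtain rfl : x = y := funext fun j => Nat.eq_of_dist_eq_zero <|
      (Finset.sum_eq_zero_iff.mp hs) j (Finset.mem_univ j)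
    exact .refl
  | succ s ih =>
    obtain ⟨i, hne⟩ : ∃ i, x i ≠ y i := by
      by_contra! h
      simp [h] at hs
    set z := if x i < y i then y i - 1 else y i + 1
    have hz : Nat.dist z (y i) = 1 ∧ Nat.dist (x i) z + 1 = Nat.dist (x i) (y i) ∧
        lo i ≤ z ∧ z ≤ hi i := by
      have : lo i ≤ x i := hx.1 i
      have : x i ≤ hi i := hx.2 i
      have : lo i ≤ y i := hy.1 i
      have : y i ≤ hi i := hy.2 i
      unfold z Nat.dist
      split_ifs <;> omega
    have hy' : Function.update y i z ∈ Set.Icc lo hi := by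
      constructor <;> intro j <;> rcases eq_or_ne j i with rfl | hj
      all_goals simp [Function.update_of_ne, hy.1 j, hy.2 j, *]
    refine .tail (ih hy' ?_) ⟨hy', hy, neighbor_update hz.1⟩
    have := sum_dist_update (x := x) (u := y) i z
    omega

theorem IsBlock.mem_of_reflTransGen {G B : Set (Fin d → ℕ)} (hB : IsBlock n d G B)
    {x y : Fin d → ℕ} (hx : x ∈ B)
    (hxy : Relation.ReflTransGen (fun u v => u ∈ cube n d \ G ∧ v ∈ cube n d \ G ∧ Neighbor u v)
      x y) : y ∈ B := by
  induction hxy with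
  | refl => exact hx
  | tail _ huv ih => exact hB.2.2.2 _ ih _ huv.2.1 huv.2.2

theorem mem_Icc_of_reflTransGen (hk : 2 ≤ k) {a b x y : Fin d → ℕ}
    (hab : ∀ i, P.IsPart (a i) (b i)) (hx : x ∈ Set.Icc (fun i => a i + (k - 1)) b)
    (hxy : Relation.ReflTransGen (fun u v => u ∈ cube n d \ gridOf n d k w P ∧
      v ∈ cube n d \ gridOf n d k w P ∧ Neighbor u v) x y) :
    y ∈ Set.Icc (fun i => a i + (k - 1)) b := by
  induction hxy with
  | refl => exact hx
  | tail _ huv ih =>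
    have hstep := fun i => (hab i).offGrid_step hk (ih.1 i) (ih.2 i)
      (mem_cube_sdiff_gridOf_iff.mp huv.2.1 i) (huv.2.2.dist_le_one i)
    exact ⟨fun i => (hstep i).1, fun i => (hstep i).2⟩

theorem IsBlock.eq_Icc (hk : 2 ≤ k) {B : Set (Fin d → ℕ)} (hB : IsBlock n d (gridOf n d k w P) B)
    {x a b : Fin d → ℕ} (hxB : x ∈ B) (hab : ∀ i, P.IsPart (a i) (b i))
    (hx : x ∈ Set.Icc (fun i => a i + (k - 1)) b) :
    B = Set.Icc (fun i => a i + (k - 1)) b := by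
  have hsub : Set.Icc (fun i => a i + (k - 1)) b ⊆ cube n d \ gridOf n d k w P := fun y hy =>
    mem_cube_sdiff_gridOf_iff.mpr fun i => ⟨a i, b i, hab i, hy.1 i, hy.2 i⟩
  refine Set.Subset.antisymm (fun y hy => mem_Icc_of_reflTransGen hk hab hx (hB.2.2.1 x hxB y hy))
    fun y hy => hB.mem_of_reflTransGen hxB ?_
  exact Relation.ReflTransGen.mono (fun u v ⟨hu, hv, huv⟩ => ⟨hsub hu, hsub hv, huv⟩) x y
    (reflTransGen_of_mem_Icc hx hy)

theorem parentSet_subset_Icc (hk : 2 ≤ k) (S : GridSystem n d k w) {i : ℕ} (hir : i ≠ sysR n w)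
    {w' : ℕ} {D : IntervalPartition n w'} (hD : S.G (i + 1) = gridOf n d k w' D)
    {B : Set (Fin d → ℕ)} {x a b : Fin d → ℕ} (hxB : x ∈ B) (hab : ∀ j, D.IsPart (a j) (b j))
    (hx : x ∈ Set.Icc (fun j => a j + (k - 1)) b) :
    parentSet n d k w S i B ⊆ Set.Icc (fun j => a j + (k - 1)) b := by
  rw [parentSet, if_neg hir, hD]
  rintro y ⟨B', ⟨hB', hBB'⟩, hy⟩
  rwa [← hB'.eq_Icc hk (hBB' hxB) hab hx]

end Blocks

theorem le_div_two_pow_sysR_sub {n w : ℕ} (hw : 0 < w) (hn : w ≤ n) (i : ℕ) :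
    w ≤ n / 2 ^ (sysR n w - i) := by
  have h : 2 ^ sysR n w ≤ n / w := Nat.pow_log_le_self 2 (Nat.div_pos hn hw).ne'
  rw [Nat.le_div_iff_mul_le (by positivity)]
  calc w * 2 ^ (sysR n w - i) ≤ w * 2 ^ sysR n w :=
        Nat.mul_le_mul_left _ (Nat.pow_le_pow_right (by norm_num) (Nat.sub_le _ _))
    _ ≤ w * (n / w) := Nat.mul_le_mul_left _ h
    _ ≤ n := Nat.mul_div_le n w

theorem div_two_pow_sub_succ_le {r i : ℕ} (hi : i < r) (n : ℕ) :
    n / 2 ^ (r - (i + 1)) ≤ 2 * (n / 2 ^ (r - i)) + 1 := by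
  have : n / 2 ^ (r - i) = n / 2 ^ (r - (i + 1)) / 2 := by
    rw [Nat.div_div_eq_div_mul, ← pow_succ, show r - (i + 1) + 1 = r - i by omega]
  omega

/-- In an `(n,d,k,2k)`-system of grids, for any `0 ≤ i ≤ r` and any
`G_i`-block `B`, we have `|Par(B)| < 3^d · |B|`. -/
theorem parent_size_lt (n d k : ℕ) (hd : 1 ≤ d) (hk : 2 ≤ k) (hn : 2 * k ≤ n)
    (S : GridSystem n d k (2 * k)) (i : ℕ) (hi : i ≤ sysR n (2 * k))
    (B : Set (Fin d → ℕ)) (hB : IsBlock n d (S.G i) B) :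
    (parentSet n d k (2 * k) S i B).ncard < 3 ^ d * B.ncard := by
  have : Nonempty (Fin d) := Fin.pos_iff_nonempty.mp hd
  have hw : ∀ j, 2 * k ≤ n / 2 ^ (sysR n (2 * k) - j) := le_div_two_pow_sysR_sub (by omega) hn
  obtain ⟨C, hC⟩ := S.isGrid i hi
  rw [hC] at hB
  obtain ⟨x, hxB⟩ := hB.1
  obtain ⟨a, b, hab, hx⟩ := exists_isPart_of_mem_cube_sdiff_gridOf (hB.2.1 hxB)
  conv_rhs => rw [hB.eq_Icc hk hxB hab hx]
  rw [show 3 ^ d = 3 ^ Fintype.card (Fin d) by simp]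
  by_cases hir : i = sysR n (2 * k)
  · rw [parentSet, if_pos hir, cube_eq_Icc]
    refine ncard_lt_pow_mul_ncard_Icc subset_rfl fun j => ?_
    have hcard := (hab j).card_eq
    have := (hab j).bounds
    rw [hir, Nat.sub_self, pow_zero, Nat.div_one] at hcard
    show n + 1 - 1 < _
    omega
  · obtain ⟨D, hD⟩ := S.isGrid (i + 1) (by omega)
    have hsub : gridOf n d k _ D ⊆ gridOf n d k _ C :=
      hD ▸ hC ▸ S.nested (i + 1) i (by omega) (by omega)
    have hcut : ∀ y, D.IsCut y → C.IsCut y := fun _ =>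
      IsCut.of_offGrid_imp hk (hw i) (by have := hw (i + 1); omega) fun _ =>
        offGrid_of_gridOf_subset hd hsub
    obtain ⟨a', b', hab', hx'⟩ :=
      exists_isPart_of_mem_cube_sdiff_gridOf (Set.sdiff_subset_sdiff_right hsub (hB.2.1 hxB))
    exact ncard_lt_pow_mul_ncard_Icc (parentSet_subset_Icc hk S hir hD hxB hab' hx') fun j =>
      core_card_lt_three_mul hk (hw i) (div_two_pow_sub_succ_le (by omega) n) hcut (hab j)
        (hab' j) (hx.1 j) (hx.2 j) (hx'.1 j) (hx'.2 j)
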